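/- Let L be a p/q-changemaker lattice with p > q ≥ 2, and let L_F be its fractional part with the vectors v_0, v_1, …, v_m constructed from the set M. Then v_0, v_1, …, v_m form a ℤ-basis of L_F; they satisfy v_i·v_{i+1} = −1 for 0 ≤ i ≤ m−1 and v_i·v_j = 0 whenever |i−j| ≥ 2; and v_i·w_0 = 0, so that v_i ∈ L, for every 1 ≤ i ≤ m. -/

import Mathlib

/-- The negative continued fraction `[b_0, …, b_n]⁻ = b_0 - 1/[b_1, …, b_n]⁻`. -/
def cfMinus : List ℚ → ℚ
  | [] => 0
  | [b] => b
  | b :: c :: rest => b - 1 / cfMinus (c :: rest)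

/-- The standard inner product on `ℤ^ι`. -/
def dot {ι : Type*} [Fintype ι] (x y : ι → ℤ) : ℤ := ∑ i, x i * y i

/-- The basis vector `f_i` (indices shifted: `fvec t s i` is `f_{i+1}`). -/
def fvec (t s : ℕ) (i : Fin t) : Fin t ⊕ Fin (s + 1) → ℤ := Pi.single (Sum.inl i) 1

/-- The basis vector `e_j`, `0 ≤ j ≤ s`. -/
def evec (t s : ℕ) (j : Fin (s + 1)) : Fin t ⊕ Fin (s + 1) → ℤ := Pi.single (Sum.inr j) 1

/-- The changemaker vector `w_0 = e_0 + σ_1 f_1 + ⋯ + σ_t f_t`. -/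
def w0 (t s : ℕ) (σ : Fin t → ℤ) : Fin t ⊕ Fin (s + 1) → ℤ :=
  Sum.elim σ fun j => if (j : ℕ) = 0 then 1 else 0

/-- The vector `w_k = -e_{m_{k-1}} + e_{m_{k-1}+1} + ⋯ + e_{m_k}` for `k ≥ 1`. -/
def wk (t s : ℕ) (m : ℕ → ℕ) (k : ℕ) : Fin t ⊕ Fin (s + 1) → ℤ :=
  Sum.elim 0 fun j =>
    if (j : ℕ) = m (k - 1) then -1
    else if m (k - 1) < (j : ℕ) ∧ (j : ℕ) ≤ m k then 1 else 0

/-- The vectors `w_0, w_1, …, w_l`. -/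
def wvec (t s : ℕ) (σ : Fin t → ℤ) (m : ℕ → ℕ) (k : ℕ) : Fin t ⊕ Fin (s + 1) → ℤ :=
  if k = 0 then w0 t s σ else wk t s m k

/-- The `p/q`-changemaker lattice `L = ⟨w_0, …, w_l⟩^⊥ ⊆ ℤ^{t+s+1}`. -/
def Lset (t s l : ℕ) (σ : Fin t → ℤ) (m : ℕ → ℕ) : Set (Fin t ⊕ Fin (s + 1) → ℤ) :=
  {x | ∀ k ≤ l, dot x (wvec t s σ m k) = 0}

/-- The fractional part `L_F = ⟨w_1, …, w_l⟩^⊥ ∩ ⟨e_0, …, e_s⟩`. -/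
def LFset (t s l : ℕ) (m : ℕ → ℕ) : Set (Fin t ⊕ Fin (s + 1) → ℤ) :=
  {x | (∀ i, x (Sum.inl i) = 0) ∧ ∀ k, 1 ≤ k → k ≤ l → dot x (wk t s m k) = 0}

/-- The index set `M = {0, 1, …, s} ∖ {m_0, m_1, …, m_l}`. -/
def Mset (s l : ℕ) (m : ℕ → ℕ) : Finset ℕ :=
  (Finset.range (s + 1)).filter fun j => ∀ k ≤ l, j ≠ m k

/-- The least element of `M` (equal to `s` if `M = ∅`). -/
def minM (s l : ℕ) (m : ℕ → ℕ) : ℕ :=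
  if h : (Mset s l m).Nonempty then (Mset s l m).min' h else s

/-- For `k ∈ M`, the least element `k'` of `M` greater than `k`; equal to `s`
if no such element exists. -/
def nxt (s l : ℕ) (m : ℕ → ℕ) (k : ℕ) : ℕ :=
  if h : ((Mset s l m).filter fun j => k < j).Nonempty then
    ((Mset s l m).filter fun j => k < j).min' h
  else s

/-- `v_0 = e_0 + e_1 + ⋯ + e_{min M}` (equal to `e_0 + ⋯ + e_s` if `M = ∅`). -/
def v0vec (t s l : ℕ) (m : ℕ → ℕ) : Fin t ⊕ Fin (s + 1) → ℤ :=
  Sum.elim 0 fun j => if (j : ℕ) ≤ minM s l m then 1 else 0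

/-- `v'_k = -e_k + e_{k+1} + ⋯ + e_{k'}` for `k ∈ M`. -/
def vKvec (t s l : ℕ) (m : ℕ → ℕ) (k : ℕ) : Fin t ⊕ Fin (s + 1) → ℤ :=
  Sum.elim 0 fun j =>
    if (j : ℕ) = k then -1
    else if k < (j : ℕ) ∧ (j : ℕ) ≤ nxt s l m k then 1 else 0

/-- The sequence `v_0, v_1, …, v_m` (`m = |M|`): `v_0` as above, and
`v_1, …, v_m` are the vectors `v'_k`, `k ∈ M`, in increasing order of `k`. -/
def vSeq (t s l : ℕ) (m : ℕ → ℕ) (i : ℕ) : Fin t ⊕ Fin (s + 1) → ℤ :=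
  if i = 0 then v0vec t s l m
  else vKvec t s l m (((Mset s l m).sort (· ≤ ·)).getD (i - 1) 0)

/-- `x_F = Σ_{j=0}^s (x·e_j) e_j`, the projection to the span of the `e_j`. -/
def Fpart (t s : ℕ) (x : Fin t ⊕ Fin (s + 1) → ℤ) : Fin t ⊕ Fin (s + 1) → ℤ :=
  ∑ j, dot x (evec t s j) • evec t s j

/-- `z` is irreducible in the lattice `S`: there are no nonzero `x, y ∈ S`
with `z = x + y` and `x·y ≥ 0`. -/
def IrredIn {ι : Type*} [Fintype ι] (S : Set (ι → ℤ)) (z : ι → ℤ) : Prop :=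
  ¬ ∃ x y : ι → ℤ, x ∈ S ∧ y ∈ S ∧ x ≠ 0 ∧ y ≠ 0 ∧ z = x + y ∧ 0 ≤ dot x y

/-- The data `(t, s, l, a, m, σ)` presents the `p/q`-changemaker lattice
`⟨w_0, …, w_l⟩^⊥ ⊆ ℤ^{t+s+1}`, where `p/q = n − r/q = [a_0, a_1, …, a_l]⁻` with
`a_0 = n`, `a_k ≥ 2` for `1 ≤ k ≤ l`; `m_0 = 0`, `m_k = a_1 + ⋯ + a_k − k`,
`s = m_l`; and `(σ_1, …, σ_t)` is a nondecreasing tuple of nonnegative integers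
satisfying the changemaker condition with `w_0·w_0 = 1 + Σ σ_i² = n`. -/
structure IsCMLattice (p q n r : ℤ) (t s l : ℕ) (a : ℕ → ℤ) (m : ℕ → ℕ)
    (σ : Fin t → ℤ) : Prop where
  hq2 : 2 ≤ q
  hqp : q < p
  hgcd : Int.gcd p q = 1
  hp : p = n * q - r
  hr0 : 0 < r
  hrq : r < q
  ha0 : a 0 = n
  hak : ∀ k, 1 ≤ k → k ≤ l → 2 ≤ a k
  hcf : cfMinus ((List.range (l + 1)).map fun i => (a i : ℚ)) = (p : ℚ) / (q : ℚ)
  hm0 : m 0 = 0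
  hmrec : ∀ k, 1 ≤ k → k ≤ l → (m k : ℤ) = (m (k - 1) : ℤ) + a k - 1
  hs : s = m l
  hσ0 : ∀ i, 0 ≤ σ i
  hσmono : Monotone σ
  hσcm : ∀ i : Fin t, σ i ≤ (∑ j ∈ Finset.univ.filter (· < i), σ j) + 1
  hσn : 1 + ∑ i, σ i ^ 2 = n


/-!
Let `b_0 = 0` and let `b_1 < ⋯ < b_{m+1}` enumerate `M ∪ {s}`. Then `v_i` is the interval vector
`±e_{b_i} + e_{b_i+1} + ⋯ + e_{b_{i+1}}`, so `v_i` and `v_j` meet only when `|i - j| = 1`, and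
`v_i·w_0 = 0` for `i ≥ 1` because `b_i > 0`. The interior of `[b_i, b_{i+1}]` avoids `M` while that
of `[m_{k-1}, m_k]` lies in `M`, so these intervals share at most two consecutive points, on which
the contributions to `v_i·w_k` cancel.

An element `x` of `L_F` is determined by its coordinates at `b_1, …, b_{m+1}`, since `x·w_k = 0`
expresses `x_{m_{k-1}}` through the coordinates to its right. At these points `∑ cᵢ vᵢ` has the
coordinates `c_j - c_{j+1}` (with `c_{m+1} = 0`), a unitriangular system over `ℤ`.
-/

open Finset

/-- `seg a A B` is `a e_A + e_{A+1} + ⋯ + e_B`: with `a = -1` it is `w_k` or `v'_k`, and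
`seg 1 0 (min M)` is `v_0`. -/
def seg (a : ℤ) (A B j : ℕ) : ℤ := if j = A then a else if A < j ∧ j ≤ B then 1 else 0

section Sums

variable {a b : ℤ} {A B C D N : ℕ}

lemma seg_eq_add (j : ℕ) :
    seg a A B j = (if j = A then a else 0) + if A < j ∧ j ≤ B then 1 else 0 := by
  unfold seg; split_ifs <;> omega

lemma sum_range_mul_seg (f : ℕ → ℤ) (hA : A < N) (hB : B < N) :
    ∑ j ∈ range N, f j * seg a A B j = a * f A + ∑ j ∈ Ioc A B, f j := by
  simp only [seg_eq_add, mul_add, mul_ite, mul_zero, mul_one, sum_add_distrib,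
    sum_ite_eq', mem_range, if_pos hA, ← sum_filter]
  congr 1
  · ring
  · congr 1; ext j; simp only [mem_filter, mem_range, mem_Ioc]; omega

lemma sum_Ioc_seg : ∑ j ∈ Ioc A B, seg b C D j =
    (if A < C ∧ C ≤ B then b else 0) + ((min B D - max A C : ℕ) : ℤ) := by
  simp only [seg_eq_add, sum_add_distrib, sum_ite_eq', mem_Ioc, sum_boole]
  rw [← Nat.card_Ioc, ← Ioc_inter_Ioc]
  congr 3
  ext j; simp only [mem_filter, mem_Ioc, mem_inter]

lemma sum_seg_mul_seg (hC : C < N) (hD : D < N) :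
    ∑ j ∈ range N, seg a A B j * seg b C D j =
      b * seg a A B C + (if C < A ∧ A ≤ D then a else 0) + ((min D B - max C A : ℕ) : ℤ) := by
  rw [sum_range_mul_seg _ hC hD, sum_Ioc_seg, add_assoc]

lemma sum_mul_indicator_sub_indicator {n j : ℕ} (g : Fin (n + 1) → ℤ) (hj : j ≤ n) :
    ∑ i : Fin (n + 1), g i * ((if (i : ℕ) = j then 1 else 0) - if (i : ℕ) = j + 1 then 1 else 0) =
      Function.extend Fin.val g 0 j - Function.extend Fin.val g 0 (j + 1) := by
  set G := Function.extend Fin.val g 0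
  have hG (i : Fin (n + 1)) : g i = G i := (Fin.val_injective.extend_apply g 0 i).symm
  have hGn : G (n + 1) = 0 := Function.extend_apply' _ _ _ fun ⟨i, hi⟩ => by omega
  simp_rw [hG]
  rw [Fin.sum_univ_eq_sum_range
    (fun i => G i * ((if i = j then 1 else 0) - if i = j + 1 then 1 else 0))]
  simp only [mul_sub, mul_boole, sum_sub_distrib, sum_ite_eq', mem_range]
  rcases lt_or_eq_of_le hj with hj | rfl
  · rw [if_pos (by omega), if_pos (by omega)]
  · rw [if_pos (by omega), if_neg (by omega), hGn]

end Sums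

lemma dot_comm {ι : Type*} [Fintype ι] (x y : ι → ℤ) : dot x y = dot y x :=
  dotProduct_comm x y

section Coordinates

variable {t s : ℕ}

/-- The coordinate `x·e_j`, extended by `0` to `j > s`. -/
def eCoord (x : Fin t ⊕ Fin (s + 1) → ℤ) (j : ℕ) : ℤ :=
  if h : j < s + 1 then x (Sum.inr ⟨j, h⟩) else 0

lemma eCoord_inr (x : Fin t ⊕ Fin (s + 1) → ℤ) (j : Fin (s + 1)) :
    eCoord x j = x (Sum.inr j) :=
  dif_pos j.isLt

lemma eCoord_sumElim (u : Fin t → ℤ) (ψ : ℕ → ℤ) {j : ℕ} (hj : j ≤ s) :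
    eCoord (Sum.elim u fun i : Fin (s + 1) => ψ i) j = ψ j := by
  rw [eCoord, dif_pos (by omega), Sum.elim_inr]

lemma eCoord_w0 (σ : Fin t → ℤ) {j : ℕ} (hj : j ≤ s) :
    eCoord (w0 t s σ) j = if j = 0 then 1 else 0 :=
  eCoord_sumElim σ (fun j => if j = 0 then 1 else 0) hj

lemma eCoord_sum_smul {ι : Type*} [Fintype ι] (c : ι → ℤ) (v : ι → Fin t ⊕ Fin (s + 1) → ℤ)
    (j : ℕ) : eCoord (∑ i, c i • v i) j = ∑ i, c i * eCoord (v i) j := by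
  unfold eCoord
  split_ifs <;> simp [Finset.sum_apply]

lemma dot_sumElim_zero (x : Fin t ⊕ Fin (s + 1) → ℤ) (ψ : ℕ → ℤ) :
    dot x (Sum.elim 0 fun j : Fin (s + 1) => ψ j) = ∑ j ∈ range (s + 1), eCoord x j * ψ j := by
  rw [dot, Fintype.sum_sum_type, ← Fin.sum_univ_eq_sum_range]
  simp [eCoord_inr]

lemma dot_sumElim_zero_sumElim_zero (φ ψ : ℕ → ℤ) :
    dot (Sum.elim (0 : Fin t → ℤ) fun j : Fin (s + 1) => φ j) (Sum.elim 0 fun j => ψ j) =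
      ∑ j ∈ range (s + 1), φ j * ψ j := by
  rw [dot_sumElim_zero]
  refine sum_congr rfl fun j hj => ?_
  rw [eCoord_sumElim _ _ (Nat.lt_succ_iff.1 (mem_range.1 hj))]

lemma eq_of_eCoord_eq {x y : Fin t ⊕ Fin (s + 1) → ℤ} (hx : ∀ i, x (Sum.inl i) = 0)
    (hy : ∀ i, y (Sum.inl i) = 0) (h : ∀ j, eCoord x j = eCoord y j) : x = y := by
  funext i
  rcases i with i | j
  · rw [hx, hy]
  · rw [← eCoord_inr x, ← eCoord_inr y, h]

end Coordinates

section Node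

variable {S : Finset ℕ} {s i j : ℕ}

/-- `node S s` runs through `0`, the elements of `S` in increasing order, and then `s`. -/
def node (S : Finset ℕ) (s i : ℕ) : ℕ :=
  if i = 0 then 0 else (S.sort (· ≤ ·)).getD (i - 1) s

lemma node_zero : node S s 0 = 0 := if_pos rfl

lemma node_of_le_card (h1 : 1 ≤ i) (hi : i ≤ S.card) :
    node S s i = (S.sort (· ≤ ·))[i - 1]'(by rw [length_sort]; omega) := by
  rw [node, if_neg (by omega), List.getD_eq_getElem]

lemma node_of_card_lt (hi : S.card < i) : node S s i = s := by
  rw [node, if_neg (by omega), List.getD_eq_default _ _ (by rw [length_sort]; omega)]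

lemma node_mem (h1 : 1 ≤ i) (hi : i ≤ S.card) : node S s i ∈ S := by
  rw [node_of_le_card h1 hi, ← mem_sort (· ≤ ·)]
  exact List.getElem_mem _

lemma exists_node_eq (hj : j ∈ S) : ∃ i, 1 ≤ i ∧ i ≤ S.card ∧ node S s i = j := by
  obtain ⟨k, hk, rfl⟩ := List.mem_iff_getElem.1 ((mem_sort (· ≤ ·)).2 hj)
  rw [length_sort] at hk
  exact ⟨k + 1, by omega, by omega, by rw [node_of_le_card (by omega) (by omega)]; rfl⟩

lemma node_le (hS : ∀ j ∈ S, j < s) (i : ℕ) : node S s i ≤ s := by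
  rcases Nat.eq_zero_or_pos i with rfl | h1
  · rw [node_zero]; omega
  rcases le_or_gt i S.card with hi | hi
  · exact (hS _ (node_mem h1 hi)).le
  · rw [node_of_card_lt hi]

lemma zero_lt_node (hS0 : ∀ j ∈ S, 0 < j) (hs : 0 < s) (h1 : 1 ≤ i) : 0 < node S s i := by
  rcases le_or_gt i S.card with hi | hi
  · exact hS0 _ (node_mem h1 hi)
  · rwa [node_of_card_lt hi]

lemma node_strictMonoOn (hS : ∀ j ∈ S, j < s) :
    StrictMonoOn (node S s) (Set.Icc 1 (S.card + 1)) := by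
  rintro i ⟨hi1, hi⟩ j ⟨hj1, hj⟩ hij
  rcases lt_or_eq_of_le hj with hj | rfl
  · rw [node_of_le_card hi1 (by omega), node_of_le_card hj1 (by omega)]
    exact (sortedLT_sort S).getElem_lt_getElem_iff.2 (by omega)
  · rw [node_of_card_lt (Nat.lt_succ_self _)]
    exact hS _ (node_mem hi1 (by omega))

lemma node_strictMonoOn_Iic (hS0 : ∀ j ∈ S, 0 < j) (hS : ∀ j ∈ S, j < s) (hs : 0 < s) :
    StrictMonoOn (node S s) (Set.Iic (S.card + 1)) := by
  intro i hi j hj hij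
  rcases Nat.eq_zero_or_pos i with rfl | hi1
  · rw [node_zero]
    exact zero_lt_node hS0 hs (by omega)
  · exact node_strictMonoOn hS ⟨hi1, hi⟩ ⟨by omega, hj⟩ hij

lemma node_succ_le (hS : ∀ j ∈ S, j < s) (hj : j ∈ S) (hlt : node S s i < j) :
    node S s (i + 1) ≤ j := by
  have hi : i ≤ S.card := by
    by_contra hi
    rw [node_of_card_lt (by omega)] at hlt
    exact absurd (hS j hj) (by omega)
  obtain ⟨k, hk1, hk, rfl⟩ := exists_node_eq (s := s) hj
  have hmono := (node_strictMonoOn hS).monotoneOn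
  have hik : i + 1 ≤ k := by
    by_contra hki
    exact absurd (hmono ⟨hk1, by omega⟩ ⟨by omega, by omega⟩ (by omega : k ≤ i)) (not_le.2 hlt)
  exact hmono ⟨by omega, by omega⟩ ⟨hk1, by omega⟩ hik

end Node

section Marked

variable {t s l : ℕ} {m : ℕ → ℕ} {i j k K : ℕ}

lemma mem_Mset_iff : j ∈ Mset s l m ↔ j ≤ s ∧ ∀ k ≤ l, j ≠ m k := by
  simp [Mset]

lemma Mset_pos (hm0 : m 0 = 0) : ∀ j ∈ Mset s l m, 0 < j := fun j hj => by
  have := (mem_Mset_iff.1 hj).2 0 (Nat.zero_le l)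
  omega

lemma Mset_lt (hs : s = m l) : ∀ j ∈ Mset s l m, j < s := fun j hj => by
  have := mem_Mset_iff.1 hj
  have := this.2 l le_rfl
  omega

lemma m_le (hm : StrictMonoOn m (Set.Iic l)) (hs : s = m l) (hk : k ≤ l) : m k ≤ s :=
  hs ▸ hm.monotoneOn (Set.mem_Iic.2 hk) (Set.mem_Iic.2 le_rfl) hk

lemma mem_Mset_of_lt_of_lt (hm : StrictMonoOn m (Set.Iic l)) (hs : s = m l) (hK : K < l)
    (h1 : m K < j) (h2 : j < m (K + 1)) : j ∈ Mset s l m := by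
  refine mem_Mset_iff.2 ⟨(h2.trans_le (m_le hm hs (k := K + 1) hK)).le, fun k hk => ?_⟩
  rcases le_or_gt k K with hkK | hkK
  · have := hm.monotoneOn (Set.mem_Iic.2 hk) (Set.mem_Iic.2 hK.le) hkK
    omega
  · have := hm.monotoneOn (show K + 1 ∈ Set.Iic l from hK) (Set.mem_Iic.2 hk) hkK
    omega

lemma exists_eq_of_notMem_Mset (hj : j ≤ s) (h : j ∉ Mset s l m) : ∃ k ≤ l, j = m k := by
  simpa [mem_Mset_iff, hj] using h

lemma minM_eq_node : minM s l m = node (Mset s l m) s 1 := by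
  rw [minM]
  split_ifs with hne
  · rw [min'_eq_sorted_zero, node_of_le_card le_rfl (card_pos.2 hne)]
  · rw [node_of_card_lt (by rw [not_nonempty_iff_eq_empty.1 hne, card_empty]; omega)]

lemma nxt_node (hs : s = m l) (h1 : 1 ≤ i) (hi : i ≤ (Mset s l m).card) :
    nxt s l m (node (Mset s l m) s i) = node (Mset s l m) s (i + 1) := by
  have hS := Mset_lt hs
  have hmono := node_strictMonoOn hS
  rw [nxt]
  split_ifs with hne
  · refine le_antisymm (min'_le _ _ (mem_filter.2 ⟨node_mem (by omega) ?_, ?_⟩)) ?_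
    · by_contra hic
      obtain ⟨j, hj⟩ := hne
      obtain ⟨hjM, hij⟩ := mem_filter.1 hj
      have := node_succ_le hS hjM hij
      rw [node_of_card_lt (by omega)] at this
      exact absurd (hS j hjM) (by omega)
    · exact hmono ⟨h1, by omega⟩ ⟨by omega, by omega⟩ (Nat.lt_succ_self i)
    · obtain ⟨hmem, hlt⟩ := mem_filter.1 (min'_mem _ hne)
      exact node_succ_le hS hmem hlt
  · rcases lt_or_eq_of_le hi with hi | rfl
    · exact absurd ⟨_, mem_filter.2 ⟨node_mem (by omega) hi,
        hmono ⟨h1, by omega⟩ ⟨by omega, by omega⟩ (Nat.lt_succ_self i)⟩⟩ hne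
    · rw [node_of_card_lt (Nat.lt_succ_self _)]

lemma vSeq_eq_sumElim_seg (hs : s = m l) (hi : i ≤ (Mset s l m).card) :
    vSeq t s l m i = Sum.elim (0 : Fin t → ℤ) fun j : Fin (s + 1) =>
      seg (if i = 0 then 1 else -1) (node (Mset s l m) s i) (node (Mset s l m) s (i + 1)) j := by
  rw [vSeq]
  split_ifs with hi0
  · subst hi0
    rw [v0vec, zero_add, ← minM_eq_node, node_zero]
    congr 1
    funext j
    unfold seg
    split_ifs <;> omega
  · have hnode : ((Mset s l m).sort (· ≤ ·)).getD (i - 1) 0 = node (Mset s l m) s i := by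
      rw [node_of_le_card (by omega) hi, List.getD_eq_getElem]
    rw [hnode, ← nxt_node hs (by omega) hi]
    rfl

lemma wk_eq_sumElim_seg (k : ℕ) :
    wk t s m k = Sum.elim (0 : Fin t → ℤ) fun j : Fin (s + 1) => seg (-1) (m (k - 1)) (m k) j :=
  rfl

end Marked

section Products

variable {t s l : ℕ} {m : ℕ → ℕ} {i j : ℕ}

lemma dot_vSeq_vSeq (hm0 : m 0 = 0) (hs : s = m l) (hij : i < j)
    (hj : j ≤ (Mset s l m).card) :
    dot (vSeq t s l m i) (vSeq t s l m j) = if j = i + 1 then -1 else 0 := by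
  have hmem := node_mem (S := Mset s l m) (s := s) le_rfl (by omega)
  have hs0 : 0 < s := (Mset_pos hm0 _ hmem).trans (Mset_lt hs _ hmem)
  have hle := node_le (Mset_lt hs)
  rw [vSeq_eq_sumElim_seg hs (by omega), vSeq_eq_sumElim_seg hs hj,
    dot_sumElim_zero_sumElim_zero,
    sum_seg_mul_seg (Nat.lt_succ_of_le (hle j)) (Nat.lt_succ_of_le (hle (j + 1)))]
  set b := node (Mset s l m) s
  have hmono := node_strictMonoOn_Iic (Mset_pos hm0) (Mset_lt hs) hs0
  have hI : ∀ k ≤ (Mset s l m).card + 1, k ∈ Set.Iic ((Mset s l m).card + 1) :=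
    fun _ => Set.mem_Iic.2
  have hAB : b i < b (i + 1) := hmono (hI _ (by omega)) (hI _ (by omega)) (Nat.lt_succ_self i)
  have hBC : b (i + 1) ≤ b j := hmono.monotoneOn (hI _ (by omega)) (hI _ (by omega)) hij
  have hCD : b j < b (j + 1) := hmono (hI _ (by omega)) (hI _ (by omega)) (Nat.lt_succ_self j)
  have hBC' : b (i + 1) = b j ↔ i + 1 = j :=
    hmono.injOn.eq_iff (hI _ (by omega)) (hI _ (by omega))
  unfold seg
  split_ifs <;> omega

lemma dot_vSeq_w0 (hm0 : m 0 = 0) (hs : s = m l) (h1 : 1 ≤ i) (hi : i ≤ (Mset s l m).card)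
    (σ : Fin t → ℤ) : dot (vSeq t s l m i) (w0 t s σ) = 0 := by
  have hA := Mset_pos hm0 _ (node_mem (s := s) h1 hi)
  rw [dot_comm, vSeq_eq_sumElim_seg hs hi, dot_sumElim_zero,
    sum_eq_single 0 (fun j hj hj0 => ?_) (by simp), eCoord_w0 σ (Nat.zero_le s)]
  · unfold seg; split_ifs <;> omega
  · rw [eCoord_w0 σ (Nat.lt_succ_iff.1 (mem_range.1 hj)), if_neg hj0, zero_mul]

lemma vSeq_mem_LFset (hm0 : m 0 = 0) (hm : StrictMonoOn m (Set.Iic l)) (hs : s = m l)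
    (hi : i ≤ (Mset s l m).card) : vSeq t s l m i ∈ LFset t s l m := by
  refine ⟨fun _ => by rw [vSeq_eq_sumElim_seg hs hi]; rfl, fun k hk1 hkl => ?_⟩
  obtain ⟨K, rfl⟩ : ∃ K, k = K + 1 := ⟨k - 1, by omega⟩
  have hCD : m K < m (K + 1) := hm (Set.mem_Iic.2 (by omega)) (Set.mem_Iic.2 hkl) (by omega)
  have hDs := m_le hm hs hkl
  rw [vSeq_eq_sumElim_seg hs hi, wk_eq_sumElim_seg, Nat.add_sub_cancel,
    dot_sumElim_zero_sumElim_zero, sum_seg_mul_seg (by omega) (by omega)]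
  set b := node (Mset s l m) s
  have hAB : b i < b (i + 1) := node_strictMonoOn_Iic (Mset_pos hm0) (Mset_lt hs) (by omega)
    (Set.mem_Iic.2 (by omega)) (Set.mem_Iic.2 (by omega)) (Nat.lt_succ_self i)
  have hBs : b (i + 1) ≤ s := node_le (Mset_lt hs) _
  have hA : i = 0 ∧ b i = 0 ∨ i ≠ 0 ∧ b i ≠ m K ∧ b i ≠ m (K + 1) ∧ 0 < b i := by
    rcases Nat.eq_zero_or_pos i with rfl | h1
    · exact Or.inl ⟨rfl, node_zero⟩
    · have hmem : b i ∈ Mset s l m := node_mem h1 hi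
      exact Or.inr ⟨by omega, (mem_Mset_iff.1 hmem).2 K (by omega),
        (mem_Mset_iff.1 hmem).2 (K + 1) hkl, Mset_pos hm0 _ hmem⟩
  have hB : b (i + 1) ≠ m K := by
    rcases lt_or_eq_of_le hi with hi | rfl
    · exact (mem_Mset_iff.1 (node_mem (by omega) hi)).2 K (by omega)
    · have : b ((Mset s l m).card + 1) = s := node_of_card_lt (Nat.lt_succ_self _)
      omega
  -- `(b i, b (i + 1))` avoids `M`, while `(m K, m (K + 1))` lies in `M`
  have hgap : min (m (K + 1)) (b (i + 1)) ≤ max (m K) (b i) + 1 := by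
    by_contra! hgap
    have hmem : max (m K) (b i) + 1 ∈ Mset s l m :=
      mem_Mset_of_lt_of_lt (K := K) hm hs (by omega) (by omega) (by omega)
    have : b (i + 1) ≤ max (m K) (b i) + 1 :=
      node_succ_le (Mset_lt hs) hmem (Nat.lt_succ_of_le (le_max_right _ _))
    omega
  unfold seg
  split_ifs <;> omega

end Products

section Basis

variable {t s l : ℕ} {m : ℕ → ℕ} {i j : ℕ}

lemma eCoord_vSeq_node (hs : s = m l) (hi : i ≤ (Mset s l m).card)
    (hj : j ≤ (Mset s l m).card) :
    eCoord (vSeq t s l m i) (node (Mset s l m) s (j + 1)) =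
      (if i = j then 1 else 0) - if i = j + 1 then 1 else 0 := by
  rw [vSeq_eq_sumElim_seg hs hi, eCoord_sumElim _ _ (node_le (Mset_lt hs) _)]
  have hmono := node_strictMonoOn (Mset_lt hs)
  set b := node (Mset s l m) s
  rcases Nat.eq_zero_or_pos i with rfl | h1
  · have : b (j + 1) ≤ b 1 ↔ j + 1 ≤ 1 :=
      hmono.le_iff_le ⟨by omega, by omega⟩ ⟨le_rfl, by omega⟩
    have hb0 : b 0 = 0 := node_zero
    rw [hb0, zero_add, if_neg (by omega : 0 ≠ j + 1), sub_zero]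
    unfold seg
    split_ifs <;> omega
  · have h₀ : b i = b (j + 1) ↔ i = j + 1 :=
      hmono.injOn.eq_iff ⟨h1, by omega⟩ ⟨by omega, by omega⟩
    have h₁ : b i < b (j + 1) ↔ i < j + 1 := hmono.lt_iff_lt ⟨h1, by omega⟩ ⟨by omega, by omega⟩
    have h₂ : b (j + 1) ≤ b (i + 1) ↔ j + 1 ≤ i + 1 :=
      hmono.le_iff_le ⟨by omega, by omega⟩ ⟨by omega, by omega⟩
    unfold seg
    split_ifs <;> omega

lemma eCoord_sum_smul_vSeq_node (hs : s = m l) (g : Fin ((Mset s l m).card + 1) → ℤ)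
    (hj : j ≤ (Mset s l m).card) :
    eCoord (∑ i, g i • vSeq t s l m i) (node (Mset s l m) s (j + 1)) =
      Function.extend Fin.val g 0 j - Function.extend Fin.val g 0 (j + 1) := by
  rw [eCoord_sum_smul, ← sum_mul_indicator_sub_indicator g hj]
  exact sum_congr rfl fun i _ => by rw [eCoord_vSeq_node hs (Nat.lt_succ_iff.1 i.isLt) hj]

/-- Inverts `c ↦ (c_j - c_{j+1})_j`, which by `eCoord_sum_smul_vSeq_node` are the coordinates of
`∑ cᵢ vᵢ` at the nodes `node (j + 1)`. -/
def vCoeff (s l : ℕ) (m : ℕ → ℕ) (x : Fin t ⊕ Fin (s + 1) → ℤ) (i : ℕ) : ℤ :=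
  ∑ k ∈ Ico i ((Mset s l m).card + 1), eCoord x (node (Mset s l m) s (k + 1))

lemma vCoeff_sum_smul_vSeq (hs : s = m l) (g : Fin ((Mset s l m).card + 1) → ℤ)
    (i : Fin ((Mset s l m).card + 1)) : vCoeff s l m (∑ i, g i • vSeq t s l m i) i = g i := by
  rw [vCoeff, sum_congr rfl fun k hk => eCoord_sum_smul_vSeq_node hs g
    (Nat.lt_succ_iff.1 (mem_Ico.1 hk).2)]
  have := sum_Ico_sub (fun k => -Function.extend Fin.val g 0 k)
    (show (i : ℕ) ≤ (Mset s l m).card + 1 by omega)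
  simp only [sub_neg_eq_add, neg_add_eq_sub] at this
  rw [this, Fin.val_injective.extend_apply,
    Function.extend_apply' _ _ _ fun ⟨i, hi⟩ => by omega, Pi.zero_apply, sub_zero]

lemma sum_smul_mem_LFset {ι : Type*} [Fintype ι] (c : ι → ℤ) {v : ι → Fin t ⊕ Fin (s + 1) → ℤ}
    (hv : ∀ i, v i ∈ LFset t s l m) : ∑ i, c i • v i ∈ LFset t s l m := by
  refine ⟨fun j => by simp [Finset.sum_apply, (hv _).1 j], fun k hk1 hkl => ?_⟩
  change (∑ i, c i • v i) ⬝ᵥ _ = 0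
  simp only [sum_dotProduct, smul_dotProduct]
  exact sum_eq_zero fun i _ => by rw [show v i ⬝ᵥ _ = 0 from (hv i).2 k hk1 hkl, smul_zero]

lemma eCoord_eq_sum_of_mem_LFset (hm : StrictMonoOn m (Set.Iic l)) (hs : s = m l)
    {x : Fin t ⊕ Fin (s + 1) → ℤ} (hx : x ∈ LFset t s l m) {K : ℕ} (hK : K < l) :
    eCoord x (m K) = ∑ j ∈ Ioc (m K) (m (K + 1)), eCoord x j := by
  have hCD : m K < m (K + 1) := hm (Set.mem_Iic.2 hK.le) (Set.mem_Iic.2 hK) (Nat.lt_succ_self K)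
  have hDs := m_le hm hs (k := K + 1) hK
  have := hx.2 (K + 1) (by omega) hK
  rw [wk_eq_sumElim_seg, Nat.add_sub_cancel, dot_sumElim_zero,
    sum_range_mul_seg _ (by omega) (by omega)] at this
  linarith

lemma eCoord_eq_of_mem_LFset (hm : StrictMonoOn m (Set.Iic l)) (hs : s = m l)
    {x y : Fin t ⊕ Fin (s + 1) → ℤ} (hx : x ∈ LFset t s l m) (hy : y ∈ LFset t s l m)
    (hfree : ∀ j ∈ insert s (Mset s l m), eCoord x j = eCoord y j) (j : ℕ) :
    eCoord x j = eCoord y j := by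
  induction h : s - j using Nat.strong_induction_on generalizing j with
  | _ d ih =>
    by_cases hjs : s < j
    · simp [eCoord, show ¬ j < s + 1 by omega]
    by_cases hj : j ∈ insert s (Mset s l m)
    · exact hfree j hj
    obtain ⟨K, hKl, rfl⟩ :=
      exists_eq_of_notMem_Mset (by omega) fun h => hj (mem_insert_of_mem h)
    have hK : K < l := lt_of_le_of_ne hKl fun h => hj (by simp [h, hs])
    have hDs := m_le hm hs (k := K + 1) hK
    rw [eCoord_eq_sum_of_mem_LFset hm hs hx hK, eCoord_eq_sum_of_mem_LFset hm hs hy hK]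
    refine sum_congr rfl fun i hi => ?_
    have := mem_Ioc.1 hi
    exact ih (s - i) (by omega) i rfl

lemma eq_of_mem_LFset_of_eCoord_node_eq (hm : StrictMonoOn m (Set.Iic l)) (hs : s = m l)
    {x y : Fin t ⊕ Fin (s + 1) → ℤ} (hx : x ∈ LFset t s l m) (hy : y ∈ LFset t s l m)
    (h : ∀ j ≤ (Mset s l m).card,
      eCoord x (node (Mset s l m) s (j + 1)) = eCoord y (node (Mset s l m) s (j + 1))) :
    x = y := by
  refine eq_of_eCoord_eq hx.1 hy.1 (eCoord_eq_of_mem_LFset hm hs hx hy fun j hj => ?_)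
  rcases mem_insert.1 hj with rfl | hj
  · have := h _ le_rfl
    rwa [node_of_card_lt (Nat.lt_succ_self _)] at this
  · obtain ⟨i, h1, hi, rfl⟩ := exists_node_eq (s := s) hj
    have := h (i - 1) (by omega)
    rwa [Nat.sub_add_cancel h1] at this

lemma eq_sum_vCoeff_smul_vSeq (hm0 : m 0 = 0) (hm : StrictMonoOn m (Set.Iic l))
    (hs : s = m l) {x : Fin t ⊕ Fin (s + 1) → ℤ} (hx : x ∈ LFset t s l m) :
    x = ∑ i : Fin ((Mset s l m).card + 1), vCoeff s l m x i • vSeq t s l m i := by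
  refine eq_of_mem_LFset_of_eCoord_node_eq hm hs hx
    (sum_smul_mem_LFset _ fun i => vSeq_mem_LFset hm0 hm hs (Nat.lt_succ_iff.1 i.isLt))
    fun j hj => ?_
  have hext (k : ℕ) : Function.extend Fin.val (fun i : Fin ((Mset s l m).card + 1) =>
      vCoeff s l m x i) 0 k = vCoeff s l m x k := by
    by_cases hk : k < (Mset s l m).card + 1
    · exact Fin.val_injective.extend_apply _ 0 ⟨k, hk⟩
    · rw [Function.extend_apply' _ _ _ fun ⟨i, hi⟩ => by omega, vCoeff, Ico_eq_empty (by omega),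
        sum_empty, Pi.zero_apply]
  rw [eCoord_sum_smul_vSeq_node hs _ hj, hext, hext, vCoeff, vCoeff,
    sum_eq_sum_Ico_succ_bot (by omega), add_sub_cancel_right]

end Basis

lemma IsCMLattice.strictMonoOn_m {p q n r : ℤ} {t s l : ℕ} {a : ℕ → ℤ} {m : ℕ → ℕ}
    {σ : Fin t → ℤ} (h : IsCMLattice p q n r t s l a m σ) : StrictMonoOn m (Set.Iic l) :=
  strictMonoOn_Iic_of_lt_succ fun k hk => by
    have hrec := h.hmrec (k + 1) (by omega) hk
    have := h.hak (k + 1) (by omega) hk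
    rw [Nat.add_sub_cancel] at hrec
    rw [Order.succ_eq_add_one]
    omega

/-- Section 6.1 of the paper: the vectors `v_0, v_1, …, v_m` form a ℤ-basis of
the fractional part `L_F`, satisfy `v_i·v_{i+1} = -1` and `v_i·v_j = 0` for
`|i - j| ≥ 2`, and `v_i·w_0 = 0` (so `v_i ∈ L`) for `1 ≤ i ≤ m`. -/
theorem stmt_7 (p q n r : ℤ) (t s l : ℕ) (a : ℕ → ℤ) (m : ℕ → ℕ) (σ : Fin t → ℤ)
    (h : IsCMLattice p q n r t s l a m σ) :
    (∀ i ≤ (Mset s l m).card, vSeq t s l m i ∈ LFset t s l m) ∧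
    (∀ x ∈ LFset t s l m, ∃! c : Fin ((Mset s l m).card + 1) → ℤ,
      x = ∑ i : Fin ((Mset s l m).card + 1), c i • vSeq t s l m (i : ℕ)) ∧
    (∀ i, i + 1 ≤ (Mset s l m).card →
      dot (vSeq t s l m i) (vSeq t s l m (i + 1)) = -1) ∧
    (∀ i j, i ≤ (Mset s l m).card → j ≤ (Mset s l m).card → 2 ≤ |(i : ℤ) - (j : ℤ)| →
      dot (vSeq t s l m i) (vSeq t s l m j) = 0) ∧
    (∀ i, 1 ≤ i → i ≤ (Mset s l m).card →
      dot (vSeq t s l m i) (w0 t s σ) = 0 ∧ vSeq t s l m i ∈ Lset t s l σ m) := by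
  have hm := h.strictMonoOn_m
  refine ⟨fun i hi => vSeq_mem_LFset h.hm0 hm h.hs hi, fun x hx => ?_, fun i hi => ?_,
    fun i j hi hj hij => ?_, fun i h1 hi => ?_⟩
  · refine ⟨fun i => vCoeff s l m x i, eq_sum_vCoeff_smul_vSeq h.hm0 hm h.hs hx, fun c hc => ?_⟩
    funext i
    rw [hc, vCoeff_sum_smul_vSeq h.hs]
  · rw [dot_vSeq_vSeq h.hm0 h.hs (Nat.lt_succ_self i) hi, if_pos rfl]
  · rcases le_abs'.1 hij with hij | hij
    · rw [dot_vSeq_vSeq h.hm0 h.hs (by omega) hj, if_neg (by omega)]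
    · rw [dot_comm, dot_vSeq_vSeq h.hm0 h.hs (by omega) hi, if_neg (by omega)]
  · have hw0 := dot_vSeq_w0 h.hm0 h.hs h1 hi σ
    refine ⟨hw0, fun k hk => ?_⟩
    rw [wvec]
    split_ifs with hk0
    · exact hw0
    · exact (vSeq_mem_LFset h.hm0 hm h.hs hi).2 k (by omega) hk
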